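/- Let G be a Grothendieck category with a projective generator, let (X,Y) be a cotorsion pair of chain complexes in Ch(G), and let C be a class of objects of G. If the sphere complexes S^n(C) belong to X for every C ∈ C and every n ∈ ℤ, then every bounded below chain complex all of whose entries lie in C also belongs to X. -/

import Mathlib

set_option linter.unusedVariables false

open CategoryTheory CategoryTheory.Limits ZeroObject

universe v u

namespace GorensteinAC





/-! ### General notions in an abelian category -/

section AbelianNotions

variable {𝒜 : Type u} [Category.{v} 𝒜] [Abelian 𝒜]

/-- `Ext¹(X,Y) = 0`, expressed by the (Yoneda) condition that every short exact
sequence `0 → Y → Z → X → 0` splits. -/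
def Ext1IsZero (X Y : 𝒜) : Prop :=
  ∀ (Z : 𝒜) (i : Y ⟶ Z) (p : Z ⟶ X) (w : i ≫ p = 0),
    (ShortComplex.mk i p w).ShortExact → ∃ s : X ⟶ Z, s ≫ p = 𝟙 X

/-- The right `Ext¹`-orthogonal of a class of objects. -/
def rightPerp (S : Set 𝒜) : Set 𝒜 := {Y | ∀ X ∈ S, Ext1IsZero X Y}

/-- The left `Ext¹`-orthogonal of a class of objects. -/
def leftPerp (S : Set 𝒜) : Set 𝒜 := {X | ∀ Y ∈ S, Ext1IsZero X Y}

/-- `(X, Y)` is a cotorsion pair. -/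
def IsCotorsionPair (X Y : Set 𝒜) : Prop := Y = rightPerp X ∧ X = leftPerp Y

/-- `(X, Y)` is a complete cotorsion pair: it is a cotorsion pair with enough
projectives and enough injectives. -/
def IsCompleteCotorsionPair (X Y : Set 𝒜) : Prop :=
  IsCotorsionPair X Y ∧
  (∀ A : 𝒜, ∃ (Y' X' : 𝒜) (i : Y' ⟶ X') (p : X' ⟶ A) (w : i ≫ p = 0),
    (ShortComplex.mk i p w).ShortExact ∧ X' ∈ X ∧ Y' ∈ Y) ∧
  (∀ A : 𝒜, ∃ (Y' X' : 𝒜) (i : A ⟶ Y') (p : Y' ⟶ X') (w : i ≫ p = 0),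
    (ShortComplex.mk i p w).ShortExact ∧ X' ∈ X ∧ Y' ∈ Y)

/-- A class is thick if it is closed under direct summands (retracts) and satisfies
the two-out-of-three property on short exact sequences. -/
def IsThick (W : Set 𝒜) : Prop :=
  (∀ A B : 𝒜, (∃ (s : A ⟶ B) (r : B ⟶ A), s ≫ r = 𝟙 A) → B ∈ W → A ∈ W) ∧
  (∀ S : ShortComplex 𝒜, S.ShortExact →
    ((S.X₁ ∈ W → S.X₂ ∈ W → S.X₃ ∈ W) ∧ (S.X₁ ∈ W → S.X₃ ∈ W → S.X₂ ∈ W) ∧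
      (S.X₂ ∈ W → S.X₃ ∈ W → S.X₁ ∈ W)))

/-- A projective cotorsion pair: a complete cotorsion pair `(C, W)` with `W` thick
and `C ∩ W` exactly the class of projective objects. -/
def IsProjectiveCotorsionPair (C W : Set 𝒜) : Prop :=
  IsCompleteCotorsionPair C W ∧ IsThick W ∧ (C ∩ W = {P : 𝒜 | Projective P})

/-- The sphere complex `S^n(A)`: `A` concentrated in degree `n`. -/
noncomputable def sphere (n : ℤ) (A : 𝒜) : ChainComplex 𝒜 ℤ :=
  (HomologicalComplex.single 𝒜 (ComplexShape.down ℤ) n).obj A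

/-- The disk complex `D^n(A)`: `A` in degrees `n` and `n-1` with identity differential. -/
noncomputable def disk (n : ℤ) (A : 𝒜) : ChainComplex 𝒜 ℤ where
  X i := if i = n ∨ i = n - 1 then A else 0
  d i j :=
    if h : i = n ∧ j = n - 1 then
      eqToHom (by (try dsimp only); rw [if_pos (Or.inl h.1), if_pos (Or.inr h.2)])
    else 0
  shape i j hij := by
    apply dif_neg
    rintro ⟨rfl, rfl⟩
    exact hij (by simp only [ComplexShape.down_Rel]; omega)
  d_comp_d' i j k hij hjk := by
    (try dsimp only)
    by_cases h : i = n ∧ j = n - 1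
    · rw [dif_neg (show ¬(j = n ∧ k = n - 1) by rintro ⟨rfl, -⟩; omega), comp_zero]
    · rw [dif_neg h, zero_comp]

end AbelianNotions






section AbelianNotionsB
variable {𝒜 : Type u} [Category.{v} 𝒜] [Abelian 𝒜]

/-- The complex `𝔻` remains exact after applying the contravariant functor `Hom(-, L)`. -/
def HomIntoExact (𝔻 : ChainComplex 𝒜 ℤ) (L : 𝒜) : Prop :=
  ∀ (n : ℤ) (f : 𝔻.X n ⟶ L), 𝔻.d (n + 1) n ≫ f = 0 →
    ∃ g : 𝔻.X (n - 1) ⟶ L, f = 𝔻.d n (n - 1) ≫ g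

/-- The complex `𝔻` remains exact after applying the covariant functor `Hom(A, -)`. -/
def HomFromExact (𝔻 : ChainComplex 𝒜 ℤ) (A : 𝒜) : Prop :=
  ∀ (n : ℤ) (f : A ⟶ 𝔻.X n), f ≫ 𝔻.d n (n - 1) = 0 →
    ∃ g : A ⟶ 𝔻.X (n + 1), f = g ≫ 𝔻.d (n + 1) n

end AbelianNotionsB

abbrev Ch (R : Type) [Ring R] := ChainComplex (ModuleCat R) ℤ
abbrev DCh (R : Type) [Ring R] := ChainComplex (Ch R) ℤ

def IsTypeFPInfty {S : Type} [Ring S] (F : ModuleCat S) : Prop :=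
  ∃ P : ProjectiveResolution F, ∀ n : ℕ, Module.Finite S (P.complex.X n)

/-- A module is countably generated if it has a countable generating set. -/
def IsCountablyGenerated {S : Type} [Ring S] (M : ModuleCat S) : Prop :=
  ∃ s : Set M, s.Countable ∧ Submodule.span S s = ⊤

/-- A chain complex is countably generated iff each component is countably generated. -/
def IsCountablyGeneratedCx {S : Type} [Ring S] (X : ChainComplex (ModuleCat S) ℤ) : Prop :=
  ∀ n : ℤ, IsCountablyGenerated (X.X n)

/-- A module `M` has projective dimension at most `n` : it admits a projective
resolution vanishing above degree `n`. -/
def HasProjDimLE {S : Type} [Ring S] (M : ModuleCat S) (n : ℕ) : Prop :=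
  ∃ P : ProjectiveResolution M, ∀ k : ℕ, n < k → IsZero (P.complex.X k)

/-- A module is absolutely pure (FP-injective) if `Ext¹(F, E) = 0` for every finitely
presented module `F`. -/
def IsAbsolutelyPure {S : Type} [Ring S] (E : ModuleCat S) : Prop :=
  ∀ F : ModuleCat S, Module.FinitePresentation S F → Ext1IsZero F E

/-- A module is absolutely clean if `Ext¹(F, A) = 0` for every module `F` of type `FP_∞`. -/
def IsAbsolutelyClean {S : Type} [Ring S] (A : ModuleCat S) : Prop :=
  ∀ F : ModuleCat S, IsTypeFPInfty F → Ext1IsZero F A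

/-- `M` has absolutely pure (FP-injective) dimension at most `n` : there is an exact
sequence `0 → M → E⁰ → ⋯ → Eⁿ → 0` with each `Eⁱ` absolutely pure. -/
def HasAbsPureDimLE {S : Type} [Ring S] (M : ModuleCat S) (n : ℕ) : Prop :=
  ∃ D : CochainComplex (ModuleCat S) ℕ,
    Nonempty (D.X 0 ≅ M) ∧ (∀ i : ℕ, D.ExactAt i) ∧
      (∀ i : ℕ, 1 ≤ i → IsAbsolutelyPure (D.X i)) ∧ (∀ i : ℕ, n + 1 < i → IsZero (D.X i))

section Coherent
variable (R : Type) [Ring R]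

/-- `R` is left coherent: every finitely generated left ideal is finitely presented. -/
def IsLeftCoherent : Prop :=
  ∀ I : Ideal R, I.FG → Module.FinitePresentation R I

/-- `R` is right coherent: every finitely generated right ideal is finitely presented. -/
def IsRightCoherent : Prop :=
  ∀ I : Submodule Rᵐᵒᵖ R, I.FG → Module.FinitePresentation Rᵐᵒᵖ I

/-- A Ding-Chen ring: a two-sided coherent ring with finite self-FP-injective dimension
on both sides. -/
def IsDingChen : Prop :=
  IsLeftCoherent R ∧ IsRightCoherent R ∧
    (∃ n : ℕ, HasAbsPureDimLE (ModuleCat.of R R) n) ∧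
    ∃ n : ℕ, HasAbsPureDimLE (ModuleCat.of Rᵐᵒᵖ Rᵐᵒᵖ) n

end Coherent

section Modules
variable {R : Type} [Ring R]

open TensorProduct in
noncomputable def ncRel (R : Type) [Ring R] (M : Type) [AddCommGroup M] [Module Rᵐᵒᵖ M]
    (N : Type) [AddCommGroup N] [Module R N] : AddSubgroup (TensorProduct ℤ M N) :=
  AddSubgroup.closure
    {z | ∃ (r : R) (m : M) (n : N),
      z = (MulOpposite.op r • m) ⊗ₜ[ℤ] n - m ⊗ₜ[ℤ] (r • n)}

def IsLevel (L : ModuleCat R) : Prop :=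
  ∀ (K P F : ModuleCat Rᵐᵒᵖ) (i : K ⟶ P) (p : P ⟶ F) (w : i ≫ p = 0),
    (ShortComplex.mk i p w).ShortExact → Projective P → IsTypeFPInfty F →
    ∀ z : TensorProduct ℤ K L,
      TensorProduct.map i.hom.toAddMonoidHom.toIntLinearMap (LinearMap.id (R := ℤ) (M := L)) z
        ∈ ncRel R P L → z ∈ ncRel R K L

/-- A module `L` is flat if for every monomorphism `K → P` of right modules, the
induced map `K ⊗_R L → P ⊗_R L` is injective. -/
def IsFlat (L : ModuleCat R) : Prop :=
  ∀ (K P : ModuleCat Rᵐᵒᵖ) (i : K ⟶ P), Mono i →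
    ∀ z : TensorProduct ℤ K L,
      TensorProduct.map i.hom.toAddMonoidHom.toIntLinearMap (LinearMap.id (R := ℤ) (M := L)) z
        ∈ ncRel R P L → z ∈ ncRel R K L

/-- `M` has flat dimension at most `n` : there is an exact sequence
`0 → Fₙ → ⋯ → F₀ → M → 0` with each `Fᵢ` flat. -/
def HasFlatDimLE (M : ModuleCat R) (n : ℕ) : Prop :=
  ∃ D : ChainComplex (ModuleCat R) ℕ,
    Nonempty (D.X 0 ≅ M) ∧ (∀ i : ℕ, D.ExactAt i) ∧
      (∀ i : ℕ, 1 ≤ i → IsFlat (D.X i)) ∧ (∀ i : ℕ, n + 1 < i → IsZero (D.X i))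

/-- A Gorenstein projective module: a cycle of an exact complex of projective modules
which remains exact under `Hom(-, Q)` for every projective module `Q`. -/
noncomputable def IsGorProjMod (M : ModuleCat R) : Prop :=
  ∃ D : ChainComplex (ModuleCat R) ℤ,
    (∀ n : ℤ, Projective (D.X n)) ∧ (∀ n : ℤ, D.ExactAt n) ∧
      (∀ Q : ModuleCat R, Projective Q → HomIntoExact D Q) ∧
      Nonempty (M ≅ kernel (D.d 0 (-1)))

/-- A Gorenstein injective module: a cycle of an exact complex of injective modules
which remains exact under `Hom(E, -)` for every injective module `E`. -/
noncomputable def IsGorInjMod (M : ModuleCat R) : Prop :=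
  ∃ D : ChainComplex (ModuleCat R) ℤ,
    (∀ n : ℤ, Injective (D.X n)) ∧ (∀ n : ℤ, D.ExactAt n) ∧
      (∀ E : ModuleCat R, Injective E → HomFromExact D E) ∧
      Nonempty (M ≅ kernel (D.d 0 (-1)))

end Modules

section Complexes
variable {R : Type} [Ring R]

def IsLevelComplex (L : Ch R) : Prop :=
  (∀ n : ℤ, L.ExactAt n) ∧ ∀ n : ℤ, IsLevel (L.cycles n)

/-- A flat chain complex: exact with all cycle modules flat. -/
def IsFlatComplex (F : Ch R) : Prop :=
  (∀ n : ℤ, F.ExactAt n) ∧ ∀ n : ℤ, IsFlat (F.cycles n)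

/-- An absolutely clean chain complex: exact with all cycle modules absolutely clean. -/
def IsAbsCleanComplex (A : Ch R) : Prop :=
  (∀ n : ℤ, A.ExactAt n) ∧ ∀ n : ℤ, IsAbsolutelyClean (A.cycles n)

def IsACAcyclicProjCx (𝔻 : DCh R) : Prop :=
  (∀ n : ℤ, Projective (𝔻.X n)) ∧ (∀ n : ℤ, 𝔻.ExactAt n) ∧
    ∀ L : Ch R, IsLevelComplex L → HomIntoExact 𝔻 L

noncomputable def IsGorACProj (X : Ch R) : Prop :=
  ∃ 𝔻 : DCh R, IsACAcyclicProjCx 𝔻 ∧ Nonempty (X ≅ kernel (𝔻.d 0 (-1)))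

/-- A Ding projective chain complex. -/
noncomputable def IsDingProjCx (X : Ch R) : Prop :=
  ∃ 𝔻 : DCh R,
    (∀ n : ℤ, Projective (𝔻.X n)) ∧ (∀ n : ℤ, 𝔻.ExactAt n) ∧
      (∀ F : Ch R, IsFlatComplex F → HomIntoExact 𝔻 F) ∧
      Nonempty (X ≅ kernel (𝔻.d 0 (-1)))

/-- A Gorenstein projective chain complex. -/
noncomputable def IsGorProjCx (X : Ch R) : Prop :=
  ∃ 𝔻 : DCh R,
    (∀ n : ℤ, Projective (𝔻.X n)) ∧ (∀ n : ℤ, 𝔻.ExactAt n) ∧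
      (∀ Q : Ch R, Projective Q → HomIntoExact 𝔻 Q) ∧
      Nonempty (X ≅ kernel (𝔻.d 0 (-1)))

/-- A Gorenstein AC-injective chain complex. -/
noncomputable def IsGorACInj (X : Ch R) : Prop :=
  ∃ 𝕀 : DCh R,
    (∀ n : ℤ, Injective (𝕀.X n)) ∧ (∀ n : ℤ, 𝕀.ExactAt n) ∧
      (∀ A : Ch R, IsAbsCleanComplex A → HomFromExact 𝕀 A) ∧
      Nonempty (X ≅ kernel (𝕀.d 0 (-1)))

/-- A Gorenstein injective chain complex. -/
noncomputable def IsGorInjCx (X : Ch R) : Prop :=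
  ∃ 𝕀 : DCh R,
    (∀ n : ℤ, Injective (𝕀.X n)) ∧ (∀ n : ℤ, 𝕀.ExactAt n) ∧
      (∀ E : Ch R, Injective E → HomFromExact 𝕀 E) ∧
      Nonempty (X ≅ kernel (𝕀.d 0 (-1)))

def chCard (X : Ch R) : Cardinal := Cardinal.mk (Σ n : ℤ, X.X n)

def dchCard (𝕏 : DCh R) : Cardinal := Cardinal.mk (Σ (n : ℤ) (k : ℤ), (𝕏.X n).X k)

end Complexes






variable {R : Type} [Ring R]

lemma mc_comp_apply {A B C : ModuleCat R} (f : A ⟶ B) (g : B ⟶ C) (x : A) :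
    (f ≫ g) x = g (f x) := rfl

lemma mc_zero_apply {A B : ModuleCat R} (x : A) : (0 : A ⟶ B) x = 0 := rfl

/-- A subcomplex of a chain complex of modules: a family of submodules preserved
by the differentials. -/
structure SubCx (X : Ch R) where
  N : ∀ n : ℤ, Submodule R (X.X n)
  d_mem : ∀ (i j : ℤ), ∀ x ∈ N i, X.d i j x ∈ N j

instance (X : Ch R) : LE (SubCx X) := ⟨fun Q Q' => ∀ n, Q.N n ≤ Q'.N n⟩

/-- A subcomplex, regarded as a chain complex in its own right. -/
noncomputable def SubCx.toCh {X : Ch R} (Q : SubCx X) : Ch R where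
  X n := ModuleCat.of R (Q.N n)
  d i j := ModuleCat.ofHom ((X.d i j).hom.restrict (Q.d_mem i j))
  shape i j h := by
    refine ModuleCat.hom_ext (LinearMap.ext fun x => Subtype.ext ?_)
    have h0 : X.d i j = 0 := X.shape i j h
    show X.d i j x.1 = _
    rw [h0]
    rfl
  d_comp_d' i j k _ _ := by
    refine ModuleCat.hom_ext (LinearMap.ext fun x => Subtype.ext ?_)
    have h0 : X.d j k (X.d i j x.1) = 0 := by
      rw [← mc_comp_apply, X.d_comp_d i j k, mc_zero_apply]
    exact h0

/-- The inclusion of a smaller subcomplex into a larger one. -/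
noncomputable def SubCx.incl {X : Ch R} {Q Q' : SubCx X} (h : Q ≤ Q') :
    Q.toCh ⟶ Q'.toCh where
  f n := ModuleCat.ofHom (Submodule.inclusion (h n))
  comm' i j _ := by
    refine ModuleCat.hom_ext (LinearMap.ext fun x => Subtype.ext ?_)
    rfl

/-- `M` is a transfinite extension (continuous union) of complexes from `S`. -/
noncomputable def IsTransfiniteExtension (S : Set (Ch R)) (M : Ch R) : Prop :=
  ∃ (lam : Ordinal.{0}) (Q : ∀ α : Ordinal, α ≤ lam → SubCx M)
    (mono : ∀ (α α' : Ordinal.{0}) (h : α ≤ α') (h' : α' ≤ lam), Q α (h.trans h') ≤ Q α' h'),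
    ((Q 0 (zero_le ..)).toCh ∈ S) ∧
    (∀ (α : Ordinal.{0}) (h : α < lam),
      cokernel (SubCx.incl (mono α (Order.succ α) (Order.le_succ α) (Order.succ_le_of_lt h)))
        ∈ S) ∧
    (∀ (γ : Ordinal.{0}) (h : γ ≤ lam), Order.IsSuccLimit γ →
      ∀ n : ℤ, (Q γ h).N n = ⨆ (α : Ordinal.{0}) (hα : α < γ), (Q α (hα.le.trans h)).N n) ∧
    (∀ n : ℤ, (Q lam le_rfl).N n = ⊤)






variable {R : Type} [Ring R]


/-- A sub-double-complex of a double complex `𝕏`: a family of submodules preserved by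
the inner and outer differentials. -/
structure SubDCx (𝕏 : DCh R) where
  N : ∀ (n k : ℤ), Submodule R ((𝕏.X n).X k)
  d_inner_mem : ∀ (n i j : ℤ), ∀ x ∈ N n i, (𝕏.X n).d i j x ∈ N n j
  d_outer_mem : ∀ (i j k : ℤ), ∀ x ∈ N i k, (𝕏.d i j).f k x ∈ N j k

instance (𝕏 : DCh R) : LE (SubDCx 𝕏) := ⟨fun Q Q' => ∀ n k, Q.N n k ≤ Q'.N n k⟩

/-- Row `n` of a sub-double-complex, as a chain complex. -/
noncomputable def SubDCx.row {𝕏 : DCh R} (Q : SubDCx 𝕏) (n : ℤ) : Ch R where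
  X k := ModuleCat.of R (Q.N n k)
  d i j := ModuleCat.ofHom (((𝕏.X n).d i j).hom.restrict (Q.d_inner_mem n i j))
  shape i j h := by
    refine ModuleCat.hom_ext (LinearMap.ext fun x => Subtype.ext ?_)
    show (𝕏.X n).d i j x.1 = _
    rw [(𝕏.X n).shape i j h]
    rfl
  d_comp_d' i j k _ _ := by
    refine ModuleCat.hom_ext (LinearMap.ext fun x => Subtype.ext ?_)
    have h0 : (𝕏.X n).d j k ((𝕏.X n).d i j x.1) = 0 := by
      rw [← mc_comp_apply, (𝕏.X n).d_comp_d i j k, mc_zero_apply]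
    exact h0

/-- A sub-double-complex, regarded as a double complex in its own right. -/
noncomputable def SubDCx.toDCh {𝕏 : DCh R} (Q : SubDCx 𝕏) : DCh R where
  X n := Q.row n
  d i j :=
    { f := fun k => ModuleCat.ofHom (((𝕏.d i j).f k).hom.restrict (Q.d_outer_mem i j k))
      comm' := fun a b _ => by
        refine ModuleCat.hom_ext (LinearMap.ext fun x => Subtype.ext ?_)
        have h0 := LinearMap.congr_fun (congrArg ModuleCat.Hom.hom ((𝕏.d i j).comm a b)) x.1
        exact h0 }
  shape i j h := by
    have h0 : 𝕏.d i j = 0 := 𝕏.shape i j h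
    refine HomologicalComplex.hom_ext _ _ fun k => ModuleCat.hom_ext (LinearMap.ext fun x => Subtype.ext ?_)
    show (𝕏.d i j).f k x.1 = _
    rw [h0]
    rfl
  d_comp_d' i j k _ _ := by
    refine HomologicalComplex.hom_ext _ _ fun m => ModuleCat.hom_ext (LinearMap.ext fun x => Subtype.ext ?_)
    have h0 : (𝕏.d j k).f m ((𝕏.d i j).f m x.1) = 0 := by
      have hdd := 𝕏.d_comp_d i j k
      calc (𝕏.d j k).f m ((𝕏.d i j).f m x.1) = ((𝕏.d i j ≫ 𝕏.d j k).f m) x.1 := rfl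
        _ = ((0 : 𝕏.X i ⟶ 𝕏.X k).f m) x.1 := by rw [hdd]
        _ = 0 := rfl
    exact h0


variable {R : Type} [Ring R]

/-- The inclusion of a smaller sub-double-complex into a larger one. -/
noncomputable def SubDCx.incl {𝕏 : DCh R} {Q Q' : SubDCx 𝕏} (h : Q ≤ Q') :
    Q.toDCh ⟶ Q'.toDCh where
  f n :=
    { f := fun k => ModuleCat.ofHom (Submodule.inclusion (h n k))
      comm' := fun i j _ => ModuleCat.hom_ext (LinearMap.ext fun x => Subtype.ext rfl) }
  comm' := fun i j _ =>
    HomologicalComplex.hom_ext _ _ fun k => ModuleCat.hom_ext (LinearMap.ext fun x => Subtype.ext rfl)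






section HomCx
variable {𝒜 : Type u} [Category.{v} 𝒜] [Abelian 𝒜]

/-- The degree-`n` part of the Hom-complex `Hom(X, Y)`:
families of maps `X_p ⟶ Y_{p+n}`. -/
abbrev HChain (X Y : ChainComplex 𝒜 ℤ) (n : ℤ) :=
  ∀ p : ℤ, X.X p ⟶ Y.X (p + n)

/-- The differential of the Hom-complex, `(δ f)_p = d_{p+m} ∘ f_p - (-1)^m f_{p-1} ∘ d_p`. -/
noncomputable def hδ (X Y : ChainComplex 𝒜 ℤ) (m n : ℤ) : HChain X Y m →+ HChain X Y n :=
  AddMonoidHom.mk'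
    (fun f p =>
      f p ≫ Y.d (p + m) (p + n) -
        (m.negOnePow : ℤ) •
          (X.d p (p + n - m) ≫ f (p + n - m) ≫ eqToHom (congrArg Y.X (by omega))))
    (by
      intro f g
      funext p
      simp only [Pi.add_apply, Preadditive.add_comp, Preadditive.comp_add, smul_add]
      abel)

/-- The `n`-th homology of the Hom-complex `Hom(X,Y)`, presented as
(cycles)/(boundaries). -/
noncomputable def homCxHomology (X Y : ChainComplex 𝒜 ℤ) (n : ℤ) : Type v :=
  (hδ X Y n (n - 1)).ker ⧸
    ((hδ X Y (n + 1) n).range.comap (hδ X Y n (n - 1)).ker.subtype)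

noncomputable instance (X Y : ChainComplex 𝒜 ℤ) (n : ℤ) : AddCommGroup (homCxHomology X Y n) := by
  unfold homCxHomology; infer_instance

/-- The suspension `Σⁿ Y`, with `(Σⁿ Y)_k = Y_{k-n}` and differential `(-1)ⁿ d`. -/
noncomputable def shiftC (n : ℤ) (Y : ChainComplex 𝒜 ℤ) : ChainComplex 𝒜 ℤ where
  X k := Y.X (k - n)
  d i j := (n.negOnePow : ℤ) • Y.d (i - n) (j - n)
  shape i j h := by
    (try dsimp only)
    rw [Y.shape, smul_zero]
    simp only [ComplexShape.down_Rel] at h ⊢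
    omega
  d_comp_d' i j k _ _ := by
    rw [Preadditive.zsmul_comp, Preadditive.comp_zsmul, Y.d_comp_d, smul_zero, smul_zero]

/-- The group of chain homotopy classes of chain maps, i.e. hom-groups in the
homotopy category `K(𝒜)`. -/
noncomputable def htpyClasses (Z W : ChainComplex 𝒜 ℤ) : Type v :=
  (HomotopyCategory.quotient 𝒜 (ComplexShape.down ℤ)).obj Z ⟶
    (HomotopyCategory.quotient 𝒜 (ComplexShape.down ℤ)).obj W

noncomputable instance (Z W : ChainComplex 𝒜 ℤ) : AddCommGroup (htpyClasses Z W) := by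
  unfold htpyClasses; infer_instance

/-- A degreewise split extension of `X` by `Y`. -/
structure DWExtension (X Y : ChainComplex 𝒜 ℤ) where
  Z : ChainComplex 𝒜 ℤ
  i : Y ⟶ Z
  p : Z ⟶ X
  w : i ≫ p = 0
  shortExact : (ShortComplex.mk i p w).ShortExact
  dwSplit : ∀ k : ℤ, ∃ r : Z.X k ⟶ Y.X k, i.f k ≫ r = 𝟙 (Y.X k)

/-- Equivalence of extensions (the Yoneda equivalence relation on `Ext¹`). -/
def DWExtension.equivRel {X Y : ChainComplex 𝒜 ℤ} (E E' : DWExtension X Y) : Prop :=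
  ∃ φ : E.Z ≅ E'.Z, E.i ≫ φ.hom = E'.i ∧ φ.hom ≫ E'.p = E.p

instance dwSetoid (X Y : ChainComplex 𝒜 ℤ) : Setoid (DWExtension X Y) where
  r := DWExtension.equivRel
  iseqv := by
    constructor
    · intro E
      exact ⟨Iso.refl _, by simp, by simp⟩
    · rintro E E' ⟨φ, h1, h2⟩
      refine ⟨φ.symm, ?_, ?_⟩
      · rw [← h1]; simp
      · rw [← h2]; simp
    · rintro E E' E'' ⟨φ, h1, h2⟩ ⟨ψ, h3, h4⟩
      refine ⟨φ ≪≫ ψ, ?_, ?_⟩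
      · simp [reassoc_of% h1, h3]
      · simp [h4, h2]

/-- The pointed set of equivalence classes of degreewise split extensions of `X` by `Y`;
this is `Ext¹_dw(X, Y)`. -/
def DWExtClasses (X Y : ChainComplex 𝒜 ℤ) : Type (max u v) :=
  Quotient (dwSetoid X Y)


end HomCx

/-!
A section of an extension `0 → Y → Z → W → 0` is built degree by degree, upwards from the
degree below which `W` vanishes. Suppose `s` is a section of `Z_{n-1} → W_{n-1}` compatible
with the differentials, and let `ρ : Z_{n-1} → Y_{n-1}` be the retraction it determines.
Replacing `Y_n` by `Z_n` in `Y`, with differential `d ≫ ρ` out of degree `n`, gives an extension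
of `S^n(W_n)` by `Y`. It splits because `Ext¹(S^n(W_n), Y) = 0`, and the splitting is a section
in degree `n` that is compatible with `s`.
-/

section Recursion

variable {α : ℤ → Sort*} (Q : ∀ n, α (n - 1) → α n → Prop) (N : ℤ) (s₀ : ∀ k, α k)

noncomputable def recStage (h₀ : ∀ k < N, Q k (s₀ (k - 1)) (s₀ k))
    (step : ∀ n a b, Q (n - 1) a b → ∃ c, Q n b c) :
    ∀ m : ℕ, {s : ∀ k, α k // ∀ k < N + m, Q k (s (k - 1)) (s k)}
  | 0 => ⟨s₀, by simpa using h₀⟩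
  | m + 1 =>
    let s := recStage h₀ step m
    let h := s.2 (N + m - 1) (by omega)
    ⟨Function.update s.1 (N + m) (step _ _ _ h).choose, fun k hk => by
      rcases lt_or_eq_of_le (show k ≤ N + m by omega) with hk | rfl
      · rw [Function.update_of_ne (by omega), Function.update_of_ne (by omega)]
        exact s.2 k hk
      · rw [Function.update_of_ne (by omega), Function.update_self]
        exact (step _ _ _ h).choose_spec⟩

theorem recStage_apply_of_lt (h₀ : ∀ k < N, Q k (s₀ (k - 1)) (s₀ k))
    (step : ∀ n a b, Q (n - 1) a b → ∃ c, Q n b c) {m m' : ℕ} (hm : m ≤ m') {k : ℤ}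
    (hk : k < N + m) :
    (recStage Q N s₀ h₀ step m').1 k = (recStage Q N s₀ h₀ step m).1 k := by
  induction m', hm using Nat.le_induction with
  | base => rfl
  | succ m' _ ih =>
    change Function.update _ (N + m') _ k = _
    rw [Function.update_of_ne (by omega), ih]

theorem exists_forall_of_forall_lt_of_step (h₀ : ∀ k < N, Q k (s₀ (k - 1)) (s₀ k))
    (step : ∀ n a b, Q (n - 1) a b → ∃ c, Q n b c) :
    ∃ s : ∀ k, α k, ∀ n, Q n (s (n - 1)) (s n) := by
  refine ⟨fun k => (recStage Q N s₀ h₀ step (k - N + 1).toNat).1 k, fun n => ?_⟩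
  have hprev := recStage_apply_of_lt Q N s₀ h₀ step (m := (n - 1 - N + 1).toNat)
    (m' := (n - N + 1).toNat) (by omega) (k := n - 1) (by omega)
  dsimp only
  rw [← hprev]
  exact (recStage Q N s₀ h₀ step _).2 n (by omega)

end Recursion

section ReplaceObj

variable {V : Type u} [Category.{v} V] [HasZeroMorphisms V]
  (Y : ChainComplex V ℤ) (n : ℤ) {A : V} (j : Y.X n ⟶ A) (δ : A ⟶ Y.X (n - 1))

noncomputable def replaceObj (hj : j ≫ δ = Y.d n (n - 1))
    (hδ : δ ≫ Y.d (n - 1) (n - 1 - 1) = 0) : ChainComplex V ℤ where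
  X k := if k = n then A else Y.X k
  d a b :=
    if ha : a = n then
      if hb : b = n - 1 then
        eqToHom (if_pos ha) ≫ δ ≫ eqToHom (by rw [if_neg (by omega), hb])
      else 0
    else if hb : b = n then
      eqToHom (if_neg ha) ≫ Y.d a n ≫ j ≫ eqToHom (if_pos hb).symm
    else eqToHom (if_neg ha) ≫ Y.d a b ≫ eqToHom (if_neg hb).symm
  shape a b hab := by
    simp only [ComplexShape.down_Rel] at hab
    by_cases ha : a = n
    · rw [dif_pos ha, dif_neg (by omega)]
    · by_cases hb : b = n
      · subst hb
        rw [dif_neg ha, dif_pos rfl, Y.shape _ _ (by simpa using hab), zero_comp, comp_zero]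
      · rw [dif_neg ha, dif_neg hb, Y.shape _ _ (by simpa using hab), zero_comp, comp_zero]
  d_comp_d' a b c hab hbc := by
    simp only [ComplexShape.down_Rel] at hab hbc
    by_cases ha : a = n
    · subst ha
      obtain rfl : b = a - 1 := by omega
      obtain rfl : c = a - 1 - 1 := by omega
      rw [dif_pos rfl, dif_pos rfl, dif_neg (by omega), dif_neg (by omega)]
      simp [reassoc_of% hδ]
    · by_cases hb : b = n
      · subst hb
        obtain rfl : c = b - 1 := by omega
        rw [dif_neg ha, dif_pos rfl, dif_pos rfl, dif_pos rfl]
        simp [reassoc_of% hj]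
      · by_cases hc : c = n
        · subst hc
          rw [dif_neg ha, dif_neg hb, dif_neg hb, dif_pos rfl]
          simp
        · rw [dif_neg ha, dif_neg hb, dif_neg hb, dif_neg hc]
          simp

variable (hj : j ≫ δ = Y.d n (n - 1)) (hδ : δ ≫ Y.d (n - 1) (n - 1 - 1) = 0)

lemma replaceObj_X_self : (replaceObj Y n j δ hj hδ).X n = A := if_pos rfl

lemma replaceObj_X_of_ne {k : ℤ} (hk : k ≠ n) : (replaceObj Y n j δ hj hδ).X k = Y.X k :=
  if_neg hk

lemma replaceObj_d_self : (replaceObj Y n j δ hj hδ).d n (n - 1) =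
    eqToHom (replaceObj_X_self ..) ≫ δ ≫
      eqToHom (replaceObj_X_of_ne _ _ _ _ hj hδ (by omega)).symm := by
  dsimp only [replaceObj]
  rw [dif_pos rfl, dif_pos rfl]

lemma replaceObj_d_to_self {a : ℤ} (ha : a ≠ n) : (replaceObj Y n j δ hj hδ).d a n =
    eqToHom (replaceObj_X_of_ne _ _ _ _ hj hδ ha) ≫ Y.d a n ≫ j ≫
      eqToHom (replaceObj_X_self ..).symm := by
  dsimp only [replaceObj]
  rw [dif_neg ha, dif_pos rfl]

lemma replaceObj_d_of_ne {a b : ℤ} (ha : a ≠ n) (hb : b ≠ n) :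
    (replaceObj Y n j δ hj hδ).d a b =
      eqToHom (replaceObj_X_of_ne _ _ _ _ hj hδ ha) ≫ Y.d a b ≫
        eqToHom (replaceObj_X_of_ne _ _ _ _ hj hδ hb).symm := by
  dsimp only [replaceObj]
  rw [dif_neg ha, dif_neg hb]

noncomputable def replaceObj.ι : Y ⟶ replaceObj Y n j δ hj hδ where
  f k :=
    if hk : k = n then
      eqToHom (congrArg Y.X hk) ≫ j ≫ eqToHom (by rw [hk, replaceObj_X_self])
    else eqToHom (replaceObj_X_of_ne _ _ _ _ hj hδ hk).symm
  comm' a b hab := by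
    simp only [ComplexShape.down_Rel] at hab
    by_cases ha : a = n
    · subst ha
      obtain rfl : b = a - 1 := by omega
      rw [dif_pos rfl, dif_neg (by omega), replaceObj_d_self]
      simp [reassoc_of% hj]
    · rw [dif_neg ha]
      by_cases hb : b = n
      · subst hb
        rw [dif_pos rfl, replaceObj_d_to_self _ _ _ _ _ _ ha]
        simp
      · rw [dif_neg hb, replaceObj_d_of_ne _ _ _ _ _ _ ha hb]
        simp

lemma replaceObj.ι_f_self : (replaceObj.ι Y n j δ hj hδ).f n =
    j ≫ eqToHom (replaceObj_X_self ..).symm := by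
  simp [replaceObj.ι]

lemma replaceObj.ι_f_of_ne {k : ℤ} (hk : k ≠ n) : (replaceObj.ι Y n j δ hj hδ).f k =
    eqToHom (replaceObj_X_of_ne _ _ _ _ hj hδ hk).symm := by
  simp [replaceObj.ι, hk]

end ReplaceObj

section ReplaceObjAbelian

variable {V : Type u} [Category.{v} V] [Abelian V]
  (Y : ChainComplex V ℤ) (n : ℤ) {A : V} (j : Y.X n ⟶ A) (δ : A ⟶ Y.X (n - 1))
  (hj : j ≫ δ = Y.d n (n - 1)) (hδ : δ ≫ Y.d (n - 1) (n - 1 - 1) = 0)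
  {B : V} {q : A ⟶ B}

noncomputable def replaceObj.π (w : j ≫ q = 0) :
    replaceObj Y n j δ hj hδ ⟶ (HomologicalComplex.single V (ComplexShape.down ℤ) n).obj B :=
  HomologicalComplex.mkHomToSingle (eqToHom (replaceObj_X_self ..) ≫ q) fun a ha => by
    rw [replaceObj_d_to_self Y n j δ hj hδ (by simp only [ComplexShape.down_Rel] at ha; omega)]
    simp [w]

lemma replaceObj.π_f_self (w : j ≫ q = 0) : (replaceObj.π Y n j δ hj hδ w).f n =
    (eqToHom (replaceObj_X_self ..) ≫ q) ≫ (HomologicalComplex.singleObjXSelf _ n B).inv :=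
  HomologicalComplex.mkHomToSingle_f _ _

lemma replaceObj.ι_π (w : j ≫ q = 0) :
    replaceObj.ι Y n j δ hj hδ ≫ replaceObj.π Y n j δ hj hδ w = 0 := by
  refine HomologicalComplex.hom_ext _ _ fun k => ?_
  by_cases hk : k = n
  · subst hk
    simp only [HomologicalComplex.comp_f, replaceObj.ι_f_self, replaceObj.π_f_self]
    simp [reassoc_of% w]
  · exact (HomologicalComplex.isZero_single_obj_X _ n B k hk).eq_of_tgt _ _

lemma replaceObj.shortExact (w : j ≫ q = 0) (hS : (ShortComplex.mk j q w).ShortExact) :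
    (ShortComplex.mk _ _ (replaceObj.ι_π Y n j δ hj hδ w)).ShortExact := by
  refine HomologicalComplex.shortExact_of_degreewise_shortExact _ fun k => ?_
  by_cases hk : k = n
  · subst hk
    change (ShortComplex.mk ((replaceObj.ι Y k j δ hj hδ).f k)
      ((replaceObj.π Y k j δ hj hδ w).f k) _).ShortExact
    refine ShortComplex.shortExact_of_iso (ShortComplex.isoMk (S₁ := .mk j q w) (Iso.refl _)
      (eqToIso (replaceObj_X_self Y k j δ hj hδ).symm)
      (HomologicalComplex.singleObjXSelf (ComplexShape.down ℤ) k B).symm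
      ?_ ?_) hS
    · simp [replaceObj.ι_f_self]
    · simp [replaceObj.π_f_self]
  · have : IsIso ((replaceObj.ι Y n j δ hj hδ).f k) := by
      rw [replaceObj.ι_f_of_ne _ _ _ _ _ _ hk]
      infer_instance
    exact (ShortComplex.Splitting.ofIsIsoOfIsZero _ this
      (HomologicalComplex.isZero_single_obj_X (ComplexShape.down ℤ) n B k hk)).shortExact

end ReplaceObjAbelian

theorem exists_section_comp_eq_zero_of_ext1IsZero_sphere {V : Type u} [Category.{v} V]
    [Abelian V] {Y : ChainComplex V ℤ} {n : ℤ} {A B : V} {j : Y.X n ⟶ A} {q : A ⟶ B}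
    {w : j ≫ q = 0} (hS : (ShortComplex.mk j q w).ShortExact) {δ : A ⟶ Y.X (n - 1)}
    (hj : j ≫ δ = Y.d n (n - 1)) (hδ : δ ≫ Y.d (n - 1) (n - 1 - 1) = 0)
    (hY : Ext1IsZero (sphere n B) Y) : ∃ t : B ⟶ A, t ≫ q = 𝟙 B ∧ t ≫ δ = 0 := by
  unfold sphere at hY
  obtain ⟨σ, hσ⟩ := hY _ _ _ _ (replaceObj.shortExact Y n j δ hj hδ w hS)
  refine ⟨(HomologicalComplex.singleObjXSelf _ n B).inv ≫ σ.f n ≫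
    eqToHom (replaceObj_X_self ..), ?_, ?_⟩
  · have := congrArg (fun φ => φ.f n) hσ
    rw [HomologicalComplex.comp_f, replaceObj.π_f_self, HomologicalComplex.id_f,
      ← Category.assoc, Iso.comp_inv_eq, Category.id_comp] at this
    simp [this]
  · have := σ.comm n (n - 1) =≫
      eqToHom (replaceObj_X_of_ne Y n j δ hj hδ (by omega : n - 1 ≠ n))
    rw [replaceObj_d_self] at this
    simpa using this

theorem exists_section_comp_d_eq {V : Type u} [Category.{v} V] [Abelian V]
    {Y Z W : ChainComplex V ℤ} {i : Y ⟶ Z} {p : Z ⟶ W} {w : i ≫ p = 0}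
    (hS : (ShortComplex.mk i p w).ShortExact) {n : ℤ} (hY : Ext1IsZero (sphere n (W.X n)) Y)
    {s' : W.X (n - 1 - 1) ⟶ Z.X (n - 1 - 1)} {s : W.X (n - 1) ⟶ Z.X (n - 1)}
    (hs : s ≫ p.f (n - 1) = 𝟙 _)
    (hss' : s ≫ Z.d (n - 1) (n - 1 - 1) = W.d (n - 1) (n - 1 - 1) ≫ s') :
    ∃ t : W.X n ⟶ Z.X n, t ≫ p.f n = 𝟙 _ ∧ t ≫ Z.d n (n - 1) = W.d n (n - 1) ≫ s := by
  have hS : ∀ k, (ShortComplex.mk (i.f k) (p.f k)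
      (by rw [← HomologicalComplex.comp_f, w, HomologicalComplex.zero_f])).ShortExact :=
    (HomologicalComplex.shortExact_iff_degreewise_shortExact _).1 hS
  obtain ⟨ρ, hiρ, hρ⟩ : ∃ ρ : Z.X (n - 1) ⟶ Y.X (n - 1),
      i.f (n - 1) ≫ ρ = 𝟙 _ ∧ ρ ≫ i.f (n - 1) + p.f (n - 1) ≫ s = 𝟙 _ :=
    let spl := ShortComplex.Splitting.ofExactOfSection _ (hS (n - 1)).exact s hs
      (hS (n - 1)).mono_f
    ⟨spl.r, spl.f_r, spl.id⟩
  have hj : i.f n ≫ Z.d n (n - 1) ≫ ρ = Y.d n (n - 1) := by simp [hiρ]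
  have hδ : (Z.d n (n - 1) ≫ ρ) ≫ Y.d (n - 1) (n - 1 - 1) = 0 := by
    have : Mono (i.f (n - 1 - 1)) := (hS (n - 1 - 1)).mono_f
    rw [← cancel_mono (i.f (n - 1 - 1)), Category.assoc, Category.assoc, ← i.comm,
      ← Category.assoc ρ, eq_sub_of_add_eq hρ]
    simp [hss']
  obtain ⟨t, ht, htδ⟩ := exists_section_comp_eq_zero_of_ext1IsZero_sphere (hS n) hj hδ hY
  refine ⟨t, ht, ?_⟩
  calc t ≫ Z.d n (n - 1) = t ≫ Z.d n (n - 1) ≫ (ρ ≫ i.f (n - 1) + p.f (n - 1) ≫ s) := by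
        rw [hρ, Category.comp_id]
    _ = W.d n (n - 1) ≫ s := by
        rw [Preadditive.comp_add, Preadditive.comp_add, reassoc_of% htδ, zero_comp, zero_add,
          ← p.comm_assoc, reassoc_of% ht]

theorem ext1IsZero_of_forall_ext1IsZero_sphere {V : Type u} [Category.{v} V] [Abelian V]
    {W Y : ChainComplex V ℤ} (N : ℤ) (hW : ∀ n < N, IsZero (W.X n))
    (hY : ∀ n, Ext1IsZero (sphere n (W.X n)) Y) : Ext1IsZero W Y := by
  intro Z i p w hS
  obtain ⟨s, hs⟩ := exists_forall_of_forall_lt_of_step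
    (fun n (a : W.X (n - 1) ⟶ Z.X (n - 1)) (b : W.X n ⟶ Z.X n) =>
      b ≫ p.f n = 𝟙 _ ∧ b ≫ Z.d n (n - 1) = W.d n (n - 1) ≫ a) N (fun _ => 0)
    (fun k hk => ⟨(hW k hk).eq_of_src _ _, (hW k hk).eq_of_src _ _⟩)
    (fun n _ _ h => exists_section_comp_d_eq hS (hY n) h.1 h.2)
  refine ⟨{ f := s, comm' := fun a b hab => ?_ }, ?_⟩
  · obtain rfl : b = a - 1 := by simp only [ComplexShape.down_Rel] at hab; omega
    exact (hs a).2
  · ext k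
    exact (hs k).1

theorem bounded_below_entries_in_left_half_general {G : Type u} [Category.{v} G] [Abelian G]
    (XX YY : Set (ChainComplex G ℤ)) (hcp : IsCotorsionPair XX YY) (C : Set G)
    (hspheres : ∀ c ∈ C, ∀ n : ℤ, sphere n c ∈ XX)
    (W : ChainComplex G ℤ) (hbdd : ∃ N : ℤ, ∀ n : ℤ, n < N → IsZero (W.X n))
    (hentries : ∀ n : ℤ, W.X n ∈ C) :
    W ∈ XX := by
  obtain ⟨N, hN⟩ := hbdd
  rw [hcp.2] at hspheres ⊢
  exact fun Y hY => ext1IsZero_of_forall_ext1IsZero_sphere N hN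
    fun n => hspheres _ (hentries n) n Y hY

/-- In a Grothendieck category with a projective generator, if all
spheres on objects of `C` lie in the left half `XX` of a cotorsion pair on `Ch(G)`,
then every bounded below complex with entries in `C` lies in `XX`. -/
theorem bounded_below_entries_in_left_half {G : Type u} [Category.{v} G] [Abelian G]
    [HasColimits G] [AB5 G] (P : G) (hproj : Projective P) (hgen : IsSeparator P)
    (XX YY : Set (ChainComplex G ℤ)) (hcp : IsCotorsionPair XX YY) (C : Set G)
    (hspheres : ∀ c ∈ C, ∀ n : ℤ, sphere n c ∈ XX)
    (W : ChainComplex G ℤ) (hbdd : ∃ N : ℤ, ∀ n : ℤ, n < N → IsZero (W.X n))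
    (hentries : ∀ n : ℤ, W.X n ∈ C) :
    W ∈ XX :=
  bounded_below_entries_in_left_half_general XX YY hcp C hspheres W hbdd hentries

end GorensteinAC
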